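/- arXiv:1310.0770 — 8 statements merged into one kernel-verified Lean document; each statement's English description precedes it below -/
import Mathlib

section
/- Let n > 0 and let t ↦ (M(t), α(t), β(t)) solve the system dM/dt = M×ω + e₁×α + e₂×β, dα/dt = α×ω, dβ/dt = β×ω with ω = M I⁻¹, I = diag(n,n,1). If |α(0)| = |β(0)| = 1 and α(0)·β(0) = 0, then the function L = n(ω₁γ₁ + ω₂γ₂) + ω₃(γ₃ − 1), where γ = α×β, is constant in time. -/
/-!
Since `n ω₁ = M₁`, `n ω₂ = M₂` and `ω₃ = M₃`, the integral is `L = M·γ − M₃`. The vectors `α`, `β`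
and hence `γ = α × β` are all carried by the same rotation `ω`, so their mutual dot products are
conserved (`α, β` stay orthonormal), and in `d(M·γ)/dt` the term `(M × ω)·γ` cancels against
`M·(γ × ω)`. What remains is the torque term `(e₁ × α + e₂ × β)·γ = e₂·α − e₁·β` (Binet–Cauchy
and orthonormality), which is also `dM₃/dt`, because `(M × ω)₃ = 0` for an axially symmetric body.
-/

open Matrix

theorem cross_dotProduct_add_dotProduct_cross {R : Type*} [CommRing R] (u v w : Fin 3 → R) :
    u ⨯₃ w ⬝ᵥ v + u ⬝ᵥ v ⨯₃ w = 0 := by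
  rw [dotProduct_comm, triple_product_permutation, ← cross_anticomm, dotProduct_neg,
    neg_add_cancel]

theorem vecMul_inv_diagonal {K ι : Type*} [Field K] [Fintype ι] [DecidableEq ι] (v d : ι → K)
    (hd : ∀ i, d i ≠ 0) : v ᵥ* (diagonal d)⁻¹ = fun i => v i / d i := by
  have hinv : (diagonal d)⁻¹ = diagonal fun i => (d i)⁻¹ := by
    refine inv_eq_left_inv ?_
    rw [diagonal_mul_diagonal, ← diagonal_one]
    exact congrArg diagonal (funext fun i => inv_mul_cancel₀ (hd i))
  ext i
  rw [hinv, vecMul_diagonal, div_eq_mul_inv]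

theorem cross_div_apply_two_eq_zero {K : Type*} [Field K] (m d : Fin 3 → K) (hd : d 0 = d 1) :
    (m ⨯₃ fun i => m i / d i) 2 = 0 := by
  simp only [cross_apply, hd, cons_val]
  ring

section Torque

/- `e₁ × a + e₂ × b` is the torque of the fields `a`, `b` applied at the points `e₁`, `e₂`. -/

variable {R : Type*} [CommRing R] {a b : Fin 3 → R}

theorem torque_dotProduct_cross (ha : a ⬝ᵥ a = 1) (hb : b ⬝ᵥ b = 1) (hab : a ⬝ᵥ b = 0) :
    (![1, 0, 0] ⨯₃ a + ![0, 1, 0] ⨯₃ b) ⬝ᵥ a ⨯₃ b = a 1 - b 0 := by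
  rw [add_dotProduct, cross_dot_cross, cross_dot_cross, ha, hb, hab, dotProduct_comm b a, hab]
  simp only [vec3_dotProduct, cons_val_zero, cons_val_one, cons_val]
  ring

theorem torque_apply_two : (![1, 0, 0] ⨯₃ a + ![0, 1, 0] ⨯₃ b) 2 = a 1 - b 0 := by
  simp only [Pi.add_apply, cross_apply, cons_val]
  ring

end Torque

section Calculus

variable {𝕜 : Type*} [NontriviallyNormedField 𝕜] [CompleteSpace 𝕜] {x : 𝕜}

theorem HasDerivAt.dotProduct {ι : Type*} [Fintype ι] {u v : 𝕜 → ι → 𝕜} {u' v' : ι → 𝕜}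
    (hu : HasDerivAt u u' x) (hv : HasDerivAt v v' x) :
    HasDerivAt (fun s => u s ⬝ᵥ v s) (u x ⬝ᵥ v' + u' ⬝ᵥ v x) x :=
  (dotProductBilin 𝕜 𝕜 (m := ι) (A := 𝕜)).toContinuousBilinearMap.hasDerivAt_of_bilinear
    (fun _ => hu) fun _ => hv

theorem HasDerivAt.cross {u v : 𝕜 → Fin 3 → 𝕜} {u' v' : Fin 3 → 𝕜}
    (hu : HasDerivAt u u' x) (hv : HasDerivAt v v' x) :
    HasDerivAt (fun s => u s ⨯₃ v s) (u x ⨯₃ v' + u' ⨯₃ v x) x :=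
  (crossProduct (R := 𝕜)).toContinuousBilinearMap.hasDerivAt_of_bilinear (fun _ => hu)
    fun _ => hv

variable {u v : 𝕜 → Fin 3 → 𝕜} {w : Fin 3 → 𝕜}

theorem hasDerivAt_dotProduct_of_rotating {f : Fin 3 → 𝕜}
    (hu : HasDerivAt u (u x ⨯₃ w + f) x) (hv : HasDerivAt v (v x ⨯₃ w) x) :
    HasDerivAt (fun s => u s ⬝ᵥ v s) (f ⬝ᵥ v x) x :=
  (hu.dotProduct hv).congr_deriv <| by
    rw [add_dotProduct]
    linear_combination cross_dotProduct_add_dotProduct_cross (u x) (v x) w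

theorem hasDerivAt_cross_of_rotating (hu : HasDerivAt u (u x ⨯₃ w) x)
    (hv : HasDerivAt v (v x ⨯₃ w) x) :
    HasDerivAt (fun s => u s ⨯₃ v s) (u x ⨯₃ v x ⨯₃ w) x :=
  (hu.cross hv).congr_deriv <| by
    rw [leibniz_cross, ← cross_anticomm (v x) (u x ⨯₃ w)]
    abel

end Calculus

theorem eq_of_hasDerivAt_zero {f : ℝ → ℝ} (hf : ∀ t, HasDerivAt f 0 t) (a b : ℝ) : f a = f b :=
  is_const_of_deriv_eq_zero (fun t => (hf t).differentiableAt) (fun t => (hf t).deriv) a b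

theorem dotProduct_eq_of_rotating {u v w : ℝ → Fin 3 → ℝ}
    (hu : ∀ t, HasDerivAt u (u t ⨯₃ w t) t) (hv : ∀ t, HasDerivAt v (v t ⨯₃ w t) t)
    (t₁ t₂ : ℝ) : u t₁ ⬝ᵥ v t₁ = u t₂ ⬝ᵥ v t₂ := by
  refine eq_of_hasDerivAt_zero (f := fun s => u s ⬝ᵥ v s) (fun t => ?_) t₁ t₂
  simpa using hasDerivAt_dotProduct_of_rotating (f := 0) (by simpa using hu t) (hv t)

/-- For the dynamically symmetric top (`I = diag(n,n,1)`, `n > 0`)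
with centers of application `e₁, e₂` and an orthonormal pair of fields
(`|α(0)| = |β(0)| = 1`, `α(0)·β(0) = 0`), the momentum integral
`L = n(ω₁γ₁ + ω₂γ₂) + ω₃(γ₃ − 1)`, where `γ = α×β`, is constant in time. -/
theorem momentum_integral_is_constant
    (n : ℝ) (hn : 0 < n)
    (M α β : ℝ → Fin 3 → ℝ)
    (ω : ℝ → Fin 3 → ℝ)
    (hω : ∀ t, ω t = M t ᵥ* (Matrix.diagonal ![n, n, 1])⁻¹)
    (hM : ∀ t, HasDerivAt M
      (M t ⨯₃ ω t + (![1, 0, 0] : Fin 3 → ℝ) ⨯₃ α t + (![0, 1, 0] : Fin 3 → ℝ) ⨯₃ β t) t)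
    (hα : ∀ t, HasDerivAt α (α t ⨯₃ ω t) t)
    (hβ : ∀ t, HasDerivAt β (β t ⨯₃ ω t) t)
    (hα0 : α 0 ⬝ᵥ α 0 = 1) (hβ0 : β 0 ⬝ᵥ β 0 = 1) (hαβ0 : α 0 ⬝ᵥ β 0 = 0)
    (γ : ℝ → Fin 3 → ℝ) (hγ : ∀ t, γ t = α t ⨯₃ β t) :
    ∀ t₁ t₂ : ℝ,
      n * (ω t₁ 0 * γ t₁ 0 + ω t₁ 1 * γ t₁ 1) + ω t₁ 2 * (γ t₁ 2 - 1)
        = n * (ω t₂ 0 * γ t₂ 0 + ω t₂ 1 * γ t₂ 1) + ω t₂ 2 * (γ t₂ 2 - 1) := by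
  have hI : ∀ i, ![n, n, 1] i ≠ 0 := by
    intro i
    fin_cases i <;> simp [hn.ne']
  have hω' : ∀ t, ω t = fun i => M t i / ![n, n, 1] i :=
    fun t => (hω t).trans (vecMul_inv_diagonal _ _ hI)
  have hL : ∀ t, n * (ω t 0 * γ t 0 + ω t 1 * γ t 1) + ω t 2 * (γ t 2 - 1)
      = M t ⬝ᵥ γ t - M t 2 := by
    intro t
    simp only [hω', cons_val_zero, cons_val_one, cons_val, div_one, vec3_dotProduct]
    field_simp
    ring
  have hγ' : ∀ t, HasDerivAt γ (γ t ⨯₃ ω t) t := by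
    intro t
    rw [funext hγ]
    exact hasDerivAt_cross_of_rotating (hα t) (hβ t)
  have hconst : ∀ t, HasDerivAt (fun s => M s ⬝ᵥ γ s - M s 2) 0 t := by
    intro t
    have hMγ := hasDerivAt_dotProduct_of_rotating ((hM t).congr_deriv (add_assoc ..)) (hγ' t)
    refine (hMγ.fun_sub (hasDerivAt_pi.1 (hM t) 2)).congr_deriv ?_
    rw [hγ, torque_dotProduct_cross ((dotProduct_eq_of_rotating hα hα t 0).trans hα0)
      ((dotProduct_eq_of_rotating hβ hβ t 0).trans hβ0)
      ((dotProduct_eq_of_rotating hα hβ t 0).trans hαβ0), add_assoc, Pi.add_apply,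
      torque_apply_two, hω', cross_div_apply_two_eq_zero _ _ rfl]
    ring
  intro t₁ t₂
  rw [hL, hL]
  exact eq_of_hasDerivAt_zero hconst t₁ t₂
end

section
/- Fix n > 0 and τ ∈ ℝ, and let T(τ) be the rotation matrix with rows (cos τ, sin τ, 0), (−sin τ, cos τ, 0), (0,0,1). Define g_τ(α, β, M) = (α̃, β̃, M̃) where α̃ = (cos τ · α + sin τ · β) T(−τ), β̃ = (−sin τ · α + cos τ · β) T(−τ), M̃ = M T(−τ) (row vectors multiplied on the right). Then: (i) if t ↦ (M(t), α(t), β(t)) solves dM/dt = M×ω + e₁×α + e₂×β, dα/dt = α×ω, dβ/dt = β×ω with ω = M I⁻¹, I = diag(n,n,1), then t ↦ g_τ(α(t), β(t), M(t)) solves the same system; (ii) g_τ preserves the function H = (1/2)(n(ω₁² + ω₂²) + ω₃²) − α₁ − β₂; (iii) if |α| = |β| and α·β = 0, then |α̃| = |β̃| and α̃·β̃ = 0. -/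
open Matrix Real

/-!
The rotation `R = T(-τ)` about `e₃` lies in `SO(3)`, so it preserves dot products and commutes
with the cross product, and it commutes with `I = diag(n, n, 1)`, hence with `I⁻¹`: thus
`ω̃ = ω R`, and `M × ω`, `α × ω`, `β × ω` transform covariantly. The mixing of `α` and `β` is
`α + iβ ↦ e^{-iτ} (α + iβ)`; on the torque `e₁ × α + e₂ × β` and on the potential `α₁ + β₂` it
is undone by `R`, because `e₁ Rᵀ = cos τ e₁ + sin τ e₂` and `e₂ Rᵀ = -sin τ e₁ + cos τ e₂`.
Finally `|α| = |β|, α ⬝ β = 0` says that `α + iβ` is isotropic, which multiplication by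
`e^{-iτ}` preserves.
-/

section

variable {m K : Type*} [Fintype m] [DecidableEq m] [CommRing K]

theorem Commute.nonsing_inv_right {A B : Matrix m m K} (h : Commute A B) : Commute A B⁻¹ := by
  by_cases hB : IsUnit B.det
  · calc A * B⁻¹ = B⁻¹ * (B * A) * B⁻¹ := by
          rw [← Matrix.mul_assoc, nonsing_inv_mul _ hB, Matrix.one_mul]
      _ = B⁻¹ * A := by
          rw [← h.eq, Matrix.mul_assoc, Matrix.mul_assoc, mul_nonsing_inv _ hB, Matrix.mul_one]
  · rw [nonsing_inv_apply_not_isUnit _ hB]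
    exact Commute.zero_right A

theorem vecMul_dotProduct_vecMul_of_mem_orthogonalGroup {R : Matrix m m K}
    (hR : R ∈ orthogonalGroup m K) (u v : m → K) : (u ᵥ* R) ⬝ᵥ (v ᵥ* R) = u ⬝ᵥ v := by
  rw [← dotProduct_mulVec, ← vecMul_transpose, vecMul_vecMul, (mem_orthogonalGroup_iff m K).mp hR,
    vecMul_one]

end

theorem cross_vecMul_of_mem_specialOrthogonalGroup {K : Type*} [CommRing K]
    {R : Matrix (Fin 3) (Fin 3) K} (hR : R ∈ specialOrthogonalGroup (Fin 3) K) (a b : Fin 3 → K) :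
    (a ᵥ* R) ⨯₃ (b ᵥ* R) = (a ⨯₃ b) ᵥ* R := by
  obtain ⟨hRo, hRdet⟩ := mem_specialOrthogonalGroup_iff.mp hR
  refine dotProduct_eq _ _ fun c => ?_
  obtain ⟨d, rfl⟩ : ∃ d, d ᵥ* R = c :=
    ⟨c ᵥ* Rᵀ, by rw [vecMul_vecMul, (mem_orthogonalGroup_iff' ..).mp hRo, vecMul_one]⟩
  have hdet : det ![a ᵥ* R, b ᵥ* R, d ᵥ* R] = det ![a, b, d] :=
    calc det ![a ᵥ* R, b ᵥ* R, d ᵥ* R] = det (of ![a, b, d] * R) := by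
          congr 1; ext i j; fin_cases i <;> rfl
      _ = det ![a, b, d] := by rw [det_mul, hRdet, mul_one]; rfl
  rw [dotProduct_comm, triple_product_permutation, triple_product_eq_det, hdet,
    ← triple_product_eq_det, ← triple_product_permutation, dotProduct_comm,
    vecMul_dotProduct_vecMul_of_mem_orthogonalGroup hRo]

theorem HasDerivAt.vecMul_const {𝕜 : Type*} [NontriviallyNormedField 𝕜] {m n : Type*} [Fintype m]
    {f : 𝕜 → m → 𝕜} {f' : m → 𝕜} {t : 𝕜} (hf : HasDerivAt f f' t) (A : Matrix m n 𝕜) :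
    HasDerivAt (fun s => f s ᵥ* A) (f' ᵥ* A) t := by
  rw [hasDerivAt_pi] at hf ⊢
  exact fun j => HasDerivAt.fun_sum fun i _ => (hf i).mul_const (A i j)

noncomputable def rotationZ (θ : ℝ) : Matrix (Fin 3) (Fin 3) ℝ :=
  !![cos θ, sin θ, 0; -sin θ, cos θ, 0; 0, 0, 1]

theorem vecMul_rotationZ (θ : ℝ) (v : Fin 3 → ℝ) :
    v ᵥ* rotationZ θ = ![v 0 * cos θ - v 1 * sin θ, v 0 * sin θ + v 1 * cos θ, v 2] := by
  ext i
  fin_cases i <;>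
    simp [rotationZ, vecMul, dotProduct, Fin.sum_univ_three, mul_comm, sub_eq_add_neg]

theorem rotationZ_mem_specialOrthogonalGroup (θ : ℝ) :
    rotationZ θ ∈ specialOrthogonalGroup (Fin 3) ℝ := by
  refine ⟨(mem_orthogonalGroup_iff' ..).mpr ?_, ?_⟩
  · ext i j
    fin_cases i <;> fin_cases j <;>
      simp [rotationZ, mul_apply, Fin.sum_univ_three, ← sq, mul_comm]
  · simp [rotationZ, det_fin_three, ← sq]

theorem commute_rotationZ_diagonal (θ a b : ℝ) : Commute (rotationZ θ) (diagonal ![a, a, b]) := by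
  ext i j; fin_cases i <;> fin_cases j <;> simp [rotationZ, mul_comm]

theorem vecMul_rotationZ_vecMul_inv_diagonal (θ a b : ℝ) (v : Fin 3 → ℝ) :
    v ᵥ* rotationZ θ ᵥ* (diagonal ![a, a, b])⁻¹ = v ᵥ* (diagonal ![a, a, b])⁻¹ ᵥ* rotationZ θ := by
  rw [vecMul_vecMul, vecMul_vecMul, (commute_rotationZ_diagonal θ a b).nonsing_inv_right.eq]

theorem sq_add_sq_vecMul_rotationZ (θ : ℝ) (v : Fin 3 → ℝ) :
    (v ᵥ* rotationZ θ) 0 ^ 2 + (v ᵥ* rotationZ θ) 1 ^ 2 = v 0 ^ 2 + v 1 ^ 2 := by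
  simp only [vecMul_rotationZ, cons_val_zero, cons_val_one]
  linear_combination (v 0 ^ 2 + v 1 ^ 2) * sin_sq_add_cos_sq θ

theorem vecMul_rotationZ_apply_two (θ : ℝ) (v : Fin 3 → ℝ) : (v ᵥ* rotationZ θ) 2 = v 2 := by
  simp [vecMul_rotationZ]

theorem torque_circleAction (τ : ℝ) (α β : Fin 3 → ℝ) :
    ![1, 0, 0] ⨯₃ ((cos τ • α + sin τ • β) ᵥ* rotationZ (-τ))
      + ![0, 1, 0] ⨯₃ (((-sin τ) • α + cos τ • β) ᵥ* rotationZ (-τ))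
      = (![1, 0, 0] ⨯₃ α + ![0, 1, 0] ⨯₃ β) ᵥ* rotationZ (-τ) := by
  simp only [vecMul_rotationZ]
  ext i; fin_cases i <;> simp [cross_apply]
  · ring
  · ring
  · linear_combination (α 1 - β 0) * sin_sq_add_cos_sq τ

theorem potential_circleAction (τ : ℝ) (α β : Fin 3 → ℝ) :
    ((cos τ • α + sin τ • β) ᵥ* rotationZ (-τ)) 0
      + (((-sin τ) • α + cos τ • β) ᵥ* rotationZ (-τ)) 1 = α 0 + β 1 := by
  simp [vecMul_rotationZ]
  linear_combination (α 0 + β 1) * sin_sq_add_cos_sq τ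

theorem dotProduct_smul_add_smul_of_isotropic {m K : Type*} [Fintype m] [CommRing K]
    {a b : m → K} (c s : K) (hab : a ⬝ᵥ a = b ⬝ᵥ b) (ha_b : a ⬝ᵥ b = 0) :
    (c • a + s • b) ⬝ᵥ (c • a + s • b) = ((-s) • a + c • b) ⬝ᵥ ((-s) • a + c • b)
      ∧ (c • a + s • b) ⬝ᵥ ((-s) • a + c • b) = 0 := by
  simp only [dotProduct_add, add_dotProduct, dotProduct_smul, smul_dotProduct, smul_eq_mul,
    dotProduct_comm b a, ha_b, hab]
  constructor <;> ring

theorem HasDerivAt.smul_add_smul_of_cross {𝕜 : Type*} [NontriviallyNormedField 𝕜]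
    {α β : 𝕜 → Fin 3 → 𝕜} {w : Fin 3 → 𝕜} {t : 𝕜} (a b : 𝕜)
    (hα : HasDerivAt α (α t ⨯₃ w) t) (hβ : HasDerivAt β (β t ⨯₃ w) t) :
    HasDerivAt (fun u => a • α u + b • β u) ((a • α t + b • β t) ⨯₃ w) t :=
  ((hα.const_smul a).add (hβ.const_smul b)).congr_deriv <| by
    simp only [map_add, map_smul, LinearMap.add_apply, LinearMap.smul_apply]

theorem circle_action_is_symmetry_general
    (n τ : ℝ)
    (T : ℝ → Matrix (Fin 3) (Fin 3) ℝ)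
    (hT : ∀ s, T s = !![cos s, sin s, 0; -sin s, cos s, 0; 0, 0, 1])
    (g : (Fin 3 → ℝ) × (Fin 3 → ℝ) × (Fin 3 → ℝ) →
         (Fin 3 → ℝ) × (Fin 3 → ℝ) × (Fin 3 → ℝ))
    (hg : ∀ α β M : Fin 3 → ℝ,
      g (α, β, M) = ((cos τ • α + sin τ • β) ᵥ* T (-τ),
                     ((-sin τ) • α + cos τ • β) ᵥ* T (-τ),
                     M ᵥ* T (-τ)))
    (H : (Fin 3 → ℝ) × (Fin 3 → ℝ) × (Fin 3 → ℝ) → ℝ)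
    (hH : ∀ α β M : Fin 3 → ℝ,
      H (α, β, M) =
        (1 / 2) * (n * ((M ᵥ* (Matrix.diagonal ![n, n, 1])⁻¹) 0 ^ 2
                      + (M ᵥ* (Matrix.diagonal ![n, n, 1])⁻¹) 1 ^ 2)
                  + (M ᵥ* (Matrix.diagonal ![n, n, 1])⁻¹) 2 ^ 2)
        - α 0 - β 1) :
    -- (i) `g_τ` maps solutions to solutions
    (∀ M α β ω : ℝ → Fin 3 → ℝ,
      (∀ t, ω t = M t ᵥ* (Matrix.diagonal ![n, n, 1])⁻¹) →
      (∀ t, HasDerivAt M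
        (M t ⨯₃ ω t + (![1, 0, 0] : Fin 3 → ℝ) ⨯₃ α t
          + (![0, 1, 0] : Fin 3 → ℝ) ⨯₃ β t) t) →
      (∀ t, HasDerivAt α (α t ⨯₃ ω t) t) →
      (∀ t, HasDerivAt β (β t ⨯₃ ω t) t) →
      ∀ Mg αg βg ωg : ℝ → Fin 3 → ℝ,
        (∀ t, αg t = (g (α t, β t, M t)).1) →
        (∀ t, βg t = (g (α t, β t, M t)).2.1) →
        (∀ t, Mg t = (g (α t, β t, M t)).2.2) →
        (∀ t, ωg t = Mg t ᵥ* (Matrix.diagonal ![n, n, 1])⁻¹) →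
        ∀ t, HasDerivAt Mg
            (Mg t ⨯₃ ωg t + (![1, 0, 0] : Fin 3 → ℝ) ⨯₃ αg t
              + (![0, 1, 0] : Fin 3 → ℝ) ⨯₃ βg t) t
          ∧ HasDerivAt αg (αg t ⨯₃ ωg t) t
          ∧ HasDerivAt βg (βg t ⨯₃ ωg t) t)
    ∧
    -- (ii) `g_τ` preserves the Hamiltonian
    (∀ α β M : Fin 3 → ℝ, H (g (α, β, M)) = H (α, β, M))
    ∧
    -- (iii) `g_τ` preserves the conditions `|α| = |β|`, `α·β = 0`
    (∀ α β M : Fin 3 → ℝ, α ⬝ᵥ α = β ⬝ᵥ β → α ⬝ᵥ β = 0 →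
      (g (α, β, M)).1 ⬝ᵥ (g (α, β, M)).1 = (g (α, β, M)).2.1 ⬝ᵥ (g (α, β, M)).2.1
      ∧ (g (α, β, M)).1 ⬝ᵥ (g (α, β, M)).2.1 = 0) := by
  obtain rfl : T = rotationZ := funext hT
  have hR := rotationZ_mem_specialOrthogonalGroup (-τ)
  refine ⟨?_, ?_, ?_⟩
  · intro M α β ω hω hM hα hβ Mg αg βg ωg hαg hβg hMg hωg t
    simp only [hg] at hαg hβg hMg
    obtain rfl : Mg = fun u => M u ᵥ* rotationZ (-τ) := funext hMg
    obtain rfl : αg = fun u => (cos τ • α u + sin τ • β u) ᵥ* rotationZ (-τ) := funext hαg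
    obtain rfl : βg = fun u => ((-sin τ) • α u + cos τ • β u) ᵥ* rotationZ (-τ) := funext hβg
    have hωg_t : ωg t = ω t ᵥ* rotationZ (-τ) := by
      rw [hωg, hω, vecMul_rotationZ_vecMul_inv_diagonal]
    simp only [hωg_t, cross_vecMul_of_mem_specialOrthogonalGroup hR]
    refine ⟨?_, ((hα t).smul_add_smul_of_cross _ _ (hβ t)).vecMul_const _,
      ((hα t).smul_add_smul_of_cross _ _ (hβ t)).vecMul_const _⟩
    rw [add_assoc, torque_circleAction, ← add_vecMul, ← add_assoc]
    exact (hM t).vecMul_const _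
  · intro α β M
    rw [hg, hH, hH, vecMul_rotationZ_vecMul_inv_diagonal, sq_add_sq_vecMul_rotationZ,
      vecMul_rotationZ_apply_two, sub_sub, sub_sub, potential_circleAction]
  · intro α β M hαβ hα_β
    simp only [hg, vecMul_dotProduct_vecMul_of_mem_orthogonalGroup hR.1]
    exact dotProduct_smul_add_smul_of_isotropic _ _ hαβ hα_β

/-- The one-parameter action
`g_τ(α, β, M) = ((cos τ · α + sin τ · β) T(−τ), (−sin τ · α + cos τ · β) T(−τ), M T(−τ))`
(i) maps solutions of the equations of motion to solutions,
(ii) preserves the Hamiltonian `H`, and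
(iii) preserves the conditions `|α| = |β|`, `α·β = 0`. -/
theorem circle_action_is_symmetry
    (n τ : ℝ) (hn : 0 < n)
    (T : ℝ → Matrix (Fin 3) (Fin 3) ℝ)
    (hT : ∀ s, T s = !![cos s, sin s, 0; -sin s, cos s, 0; 0, 0, 1])
    (g : (Fin 3 → ℝ) × (Fin 3 → ℝ) × (Fin 3 → ℝ) →
         (Fin 3 → ℝ) × (Fin 3 → ℝ) × (Fin 3 → ℝ))
    (hg : ∀ α β M : Fin 3 → ℝ,
      g (α, β, M) = ((cos τ • α + sin τ • β) ᵥ* T (-τ),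
                     ((-sin τ) • α + cos τ • β) ᵥ* T (-τ),
                     M ᵥ* T (-τ)))
    (H : (Fin 3 → ℝ) × (Fin 3 → ℝ) × (Fin 3 → ℝ) → ℝ)
    (hH : ∀ α β M : Fin 3 → ℝ,
      H (α, β, M) =
        (1 / 2) * (n * ((M ᵥ* (Matrix.diagonal ![n, n, 1])⁻¹) 0 ^ 2
                      + (M ᵥ* (Matrix.diagonal ![n, n, 1])⁻¹) 1 ^ 2)
                  + (M ᵥ* (Matrix.diagonal ![n, n, 1])⁻¹) 2 ^ 2)
        - α 0 - β 1) :
    -- (i) `g_τ` maps solutions to solutions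
    (∀ M α β ω : ℝ → Fin 3 → ℝ,
      (∀ t, ω t = M t ᵥ* (Matrix.diagonal ![n, n, 1])⁻¹) →
      (∀ t, HasDerivAt M
        (M t ⨯₃ ω t + (![1, 0, 0] : Fin 3 → ℝ) ⨯₃ α t
          + (![0, 1, 0] : Fin 3 → ℝ) ⨯₃ β t) t) →
      (∀ t, HasDerivAt α (α t ⨯₃ ω t) t) →
      (∀ t, HasDerivAt β (β t ⨯₃ ω t) t) →
      ∀ Mg αg βg ωg : ℝ → Fin 3 → ℝ,
        (∀ t, αg t = (g (α t, β t, M t)).1) →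
        (∀ t, βg t = (g (α t, β t, M t)).2.1) →
        (∀ t, Mg t = (g (α t, β t, M t)).2.2) →
        (∀ t, ωg t = Mg t ᵥ* (Matrix.diagonal ![n, n, 1])⁻¹) →
        ∀ t, HasDerivAt Mg
            (Mg t ⨯₃ ωg t + (![1, 0, 0] : Fin 3 → ℝ) ⨯₃ αg t
              + (![0, 1, 0] : Fin 3 → ℝ) ⨯₃ βg t) t
          ∧ HasDerivAt αg (αg t ⨯₃ ωg t) t
          ∧ HasDerivAt βg (βg t ⨯₃ ωg t) t)
    ∧
    -- (ii) `g_τ` preserves the Hamiltonian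
    (∀ α β M : Fin 3 → ℝ, H (g (α, β, M)) = H (α, β, M))
    ∧
    -- (iii) `g_τ` preserves the conditions `|α| = |β|`, `α·β = 0`
    (∀ α β M : Fin 3 → ℝ, α ⬝ᵥ α = β ⬝ᵥ β → α ⬝ᵥ β = 0 →
      (g (α, β, M)).1 ⬝ᵥ (g (α, β, M)).1 = (g (α, β, M)).2.1 ⬝ᵥ (g (α, β, M)).2.1
      ∧ (g (α, β, M)).1 ⬝ᵥ (g (α, β, M)).2.1 = 0) :=
  circle_action_is_symmetry_general n τ T hT g hg H hH
end

section
/- If α, β ∈ ℝ³ satisfy |α| = |β| = 1 and α·β = 0, then √((α₁ − β₂)² + (α₂ + β₁)²) + √((α₁ + β₂)² + (α₂ − β₁)²) = 2. -/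
open Matrix

/-- For an orthonormal pair `α, β ∈ ℝ³`,
`√((α₁ − β₂)² + (α₂ + β₁)²) + √((α₁ + β₂)² + (α₂ − β₁)²) = 2`. -/
theorem x_plus_y_eq_two
    (α β : Fin 3 → ℝ)
    (hα : α ⬝ᵥ α = 1) (hβ : β ⬝ᵥ β = 1) (hαβ : α ⬝ᵥ β = 0) :
    Real.sqrt ((α 0 - β 1) ^ 2 + (α 1 + β 0) ^ 2)
      + Real.sqrt ((α 0 + β 1) ^ 2 + (α 1 - β 0) ^ 2) = 2 := by
  simp only [dotProduct, Fin.sum_univ_three] at hα hβ hαβ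
  set a := α 0; set b := α 1; set c := α 2
  set d := β 0; set e := β 1; set f := β 2
  have h1 : (0:ℝ) ≤ (a - e) ^ 2 + (b + d) ^ 2 := by positivity
  have h2 : (0:ℝ) ≤ (a + e) ^ 2 + (b - d) ^ 2 := by positivity
  have key : ((a - e) ^ 2 + (b + d) ^ 2) * ((a + e) ^ 2 + (b - d) ^ 2)
      = (c ^ 2 + f ^ 2) ^ 2 := by
    linear_combination (2*(f^2 - c^2) + (a^2 + b^2 + c^2) - (d^2 + e^2 + f^2)) * (hα - hβ)
      + (4*(a*d + b*e + c*f) - 8*c*f) * hαβ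
  have hs : Real.sqrt ((a - e) ^ 2 + (b + d) ^ 2) * Real.sqrt ((a + e) ^ 2 + (b - d) ^ 2)
      = c ^ 2 + f ^ 2 := by
    rw [← Real.sqrt_mul h1, key, Real.sqrt_sq (by positivity)]
  have sumsq : (Real.sqrt ((a - e) ^ 2 + (b + d) ^ 2)
      + Real.sqrt ((a + e) ^ 2 + (b - d) ^ 2)) ^ 2 = 4 := by
    rw [add_sq, Real.sq_sqrt h1, Real.sq_sqrt h2, mul_assoc, hs]
    linear_combination 2 * hα + 2 * hβ
  have hnn : (0:ℝ) ≤ Real.sqrt ((a - e) ^ 2 + (b + d) ^ 2)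
      + Real.sqrt ((a + e) ^ 2 + (b - d) ^ 2) := by positivity
  nlinarith [sumsq, hnn]
end

section
/- If α, β ∈ ℝ³ satisfy |α| = |β| = 1 and α·β = 0, then α₃² + β₃² = √((α₁ − β₂)² + (α₂ + β₁)²) · √((α₁ + β₂)² + (α₂ − β₁)²). -/
open Matrix

/-- For an orthonormal pair `α, β ∈ ℝ³`,
`α₃² + β₃² = √((α₁ − β₂)² + (α₂ + β₁)²) · √((α₁ + β₂)² + (α₂ − β₁)²)`. -/
theorem z_squared_eq_xy
    (α β : Fin 3 → ℝ)
    (hα : α ⬝ᵥ α = 1) (hβ : β ⬝ᵥ β = 1) (hαβ : α ⬝ᵥ β = 0) :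
    α 2 ^ 2 + β 2 ^ 2
      = Real.sqrt ((α 0 - β 1) ^ 2 + (α 1 + β 0) ^ 2)
        * Real.sqrt ((α 0 + β 1) ^ 2 + (α 1 - β 0) ^ 2) := by
  simp only [dotProduct, Fin.sum_univ_three] at hα hβ hαβ
  rw [← Real.sqrt_mul (by positivity)]
  have key : ((α 0 - β 1) ^ 2 + (α 1 + β 0) ^ 2)
      * ((α 0 + β 1) ^ 2 + (α 1 - β 0) ^ 2) = (α 2 ^ 2 + β 2 ^ 2) ^ 2 := by
    linear_combination (2*(β 2^2 - α 2^2) + ((α 0*α 0+α 1*α 1+α 2*α 2) - (β 0*β 0+β 1*β 1+β 2*β 2))) * hα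
      + (-2*(β 2^2 - α 2^2) - ((α 0*α 0+α 1*α 1+α 2*α 2) - (β 0*β 0+β 1*β 1+β 2*β 2))) * hβ
      + (-8*α 2*β 2 + 4*(α 0*β 0+α 1*β 1+α 2*β 2)) * hαβ
  rw [key, Real.sqrt_sq (by positivity)]
end

section
/- Let F₁ = z₁² + x₁y₂, F₂ = z₂² + x₂y₁, F₃ = x₁x₂ + y₁y₂ + 2z₁z₂ be polynomials in the six complex variables x₁, x₂, y₁, y₂, z₁, z₂. Then each of the three derivations V₁ = 2z₂ ∂/∂x₂ + 2z₁ ∂/∂y₂ − x₁ ∂/∂z₁ − y₁ ∂/∂z₂, V₂ = 2z₁ ∂/∂x₁ + 2z₂ ∂/∂y₁ − x₂ ∂/∂z₂ − y₂ ∂/∂z₁, V₃ = x₁ ∂/∂x₁ − x₂ ∂/∂x₂ + y₁ ∂/∂y₁ − y₂ ∂/∂y₂ annihilates all three polynomials: Vᵢ(Fⱼ) = 0 for all i, j ∈ {1,2,3}. In particular, these vector fields are tangent to the complex variety {F₁ = F₂ = 0, F₃ = 4}. -/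
open MvPolynomial

/- Variables: `0 ↦ x₁, 1 ↦ x₂, 2 ↦ y₁, 3 ↦ y₂, 4 ↦ z₁, 5 ↦ z₂`. -/

/-- The polynomials `F₁ = z₁² + x₁y₂`, `F₂ = z₂² + x₂y₁`,
`F₃ = x₁x₂ + y₁y₂ + 2z₁z₂`. -/
noncomputable def casimirPoly : Fin 3 → MvPolynomial (Fin 6) ℂ :=
  ![X 4 ^ 2 + X 0 * X 3,
    X 5 ^ 2 + X 1 * X 2,
    X 0 * X 1 + X 2 * X 3 + 2 * X 4 * X 5]

/-- The derivations
`V₁ = 2z₂ ∂x₂ + 2z₁ ∂y₂ − x₁ ∂z₁ − y₁ ∂z₂`,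
`V₂ = 2z₁ ∂x₁ + 2z₂ ∂y₁ − x₂ ∂z₂ − y₂ ∂z₁`,
`V₃ = x₁ ∂x₁ − x₂ ∂x₂ + y₁ ∂y₁ − y₂ ∂y₂`. -/
noncomputable def tangentDerivation :
    Fin 3 → MvPolynomial (Fin 6) ℂ → MvPolynomial (Fin 6) ℂ :=
  ![fun F => 2 * X 5 * pderiv 1 F + 2 * X 4 * pderiv 3 F
              - X 0 * pderiv 4 F - X 2 * pderiv 5 F,
    fun F => 2 * X 4 * pderiv 0 F + 2 * X 5 * pderiv 2 F
              - X 1 * pderiv 5 F - X 3 * pderiv 4 F,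
    fun F => X 0 * pderiv 0 F - X 1 * pderiv 1 F
              + X 2 * pderiv 2 F - X 3 * pderiv 3 F]

lemma pderiv_two (i : Fin 6) : pderiv i (2 : MvPolynomial (Fin 6) ℂ) = 0 := by
  have h : (2 : MvPolynomial (Fin 6) ℂ) = C 2 := (map_ofNat C 2).symm
  rw [h, pderiv_C]

/-- each derivation `Vᵢ` annihilates each of `F₁, F₂, F₃`;
in particular these vector fields are tangent to the variety
`{F₁ = F₂ = 0, F₃ = 4}`. -/
theorem derivations_annihilate_casimirs :
    ∀ i j : Fin 3, tangentDerivation i (casimirPoly j) = 0 := by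
  intro i j
  fin_cases i <;> fin_cases j <;>
    (try simp [tangentDerivation, casimirPoly, pderiv_X, Pi.single_apply, pderiv_two]) <;> try ring
end

section
/- Let α, β ∈ ℝ³ satisfy |α| = |β| = 1 and α·β = 0. Then e₁×α + e₂×β = 0 if and only if one of the following holds: (α, β) = (e₁, e₂), or (α, β) = (−e₁, −e₂), or α×β = −e₃. Moreover, the pairs with α×β = −e₃ form the circle α = (cos θ, sin θ, 0), β = (sin θ, −cos θ, 0), θ ∈ ℝ. -/
/-!
The torque `e₁×α + e₂×β` is `(β₃, -α₃, α₂ - β₁)`, so it vanishes exactly when `α, β` lie in the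
plane `x₃ = 0` and the `2 × 2` matrix with columns `α, β` is symmetric. A symmetric orthogonal
`2 × 2` matrix is `±1` or a reflection, and the reflections are the case `α×β = -e₃`.
For orthonormal `α, β` one has `β = (α×β)×α`, so `α×β = n` iff `α ⊥ n` and `β = n×α`;
for `n = -e₃` this reads `α₃ = 0`, `β = (α₂, -α₁, 0)`, with `α` on the unit circle of the plane.
-/

open Matrix Real

lemma exists_cos_sin_eq_of_sq_add_sq_eq_one {x y : ℝ} (h : x ^ 2 + y ^ 2 = 1) :
    ∃ θ : ℝ, cos θ = x ∧ sin θ = y := by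
  have hz : ‖(⟨x, y⟩ : ℂ)‖ = 1 := by
    rw [Complex.norm_def, Complex.normSq_mk, ← sq, ← sq, h, sqrt_one]
  exact ⟨Complex.arg ⟨x, y⟩, by simpa [hz] using Complex.norm_mul_cos_arg ⟨x, y⟩,
    by simpa [hz] using Complex.norm_mul_sin_arg ⟨x, y⟩⟩

lemma eq_vec3_iff {M : Type*} {v : Fin 3 → M} {a b c : M} :
    v = ![a, b, c] ↔ v 0 = a ∧ v 1 = b ∧ v 2 = c := by
  refine ⟨fun h => by simp [h], fun ⟨h0, h1, h2⟩ => ?_⟩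
  ext i
  fin_cases i <;> simp [h0, h1, h2]

section CrossProduct

variable {R : Type*} [CommRing R]

lemma e₁_cross_add_e₂_cross (α β : Fin 3 → R) :
    ![1, 0, 0] ⨯₃ α + ![0, 1, 0] ⨯₃ β = ![β 2, -α 2, α 1 - β 0] := by
  simp [cross_apply, sub_eq_add_neg]

lemma e₁_cross_add_e₂_cross_eq_zero_iff (α β : Fin 3 → R) :
    ![1, 0, 0] ⨯₃ α + ![0, 1, 0] ⨯₃ β = 0 ↔ α 2 = 0 ∧ β 2 = 0 ∧ β 0 = α 1 := by
  simp only [e₁_cross_add_e₂_cross, cons_eq_zero_iff, zero_empty, neg_eq_zero, sub_eq_zero,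
    and_true]
  tauto

lemma cross_eq_iff_of_dotProduct {α β n : Fin 3 → R} (hα : α ⬝ᵥ α = 1) (hαβ : α ⬝ᵥ β = 0) :
    α ⨯₃ β = n ↔ α ⬝ᵥ n = 0 ∧ β = n ⨯₃ α := by
  constructor
  · rintro rfl
    refine ⟨dot_self_cross α β, ?_⟩
    rw [cross_cross_eq_smul_sub_smul, hα, dotProduct_comm, hαβ, one_smul, zero_smul, sub_zero]
  · rintro ⟨hαn, rfl⟩
    rw [cross_cross_eq_smul_sub_smul', hα, dotProduct_comm, hαn, one_smul, zero_smul, sub_zero]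

lemma cross_eq_neg_e₃_iff {α β : Fin 3 → R} (hα : α ⬝ᵥ α = 1) (hαβ : α ⬝ᵥ β = 0) :
    α ⨯₃ β = ![0, 0, -1] ↔ α 2 = 0 ∧ β = ![α 1, -α 0, 0] := by
  rw [cross_eq_iff_of_dotProduct hα hαβ, vec3_dotProduct, cross_apply]
  simp

lemma e₁_cross_add_e₂_cross_eq_zero_iff_of_orthonormal [IsDomain R] {α β : Fin 3 → R}
    (hα : α ⬝ᵥ α = 1) (hβ : β ⬝ᵥ β = 1) (hαβ : α ⬝ᵥ β = 0) :
    ![1, 0, 0] ⨯₃ α + ![0, 1, 0] ⨯₃ β = 0 ↔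
      (α = ![1, 0, 0] ∧ β = ![0, 1, 0]) ∨ (α = ![-1, 0, 0] ∧ β = ![0, -1, 0]) ∨
        α ⨯₃ β = ![0, 0, -1] := by
  simp only [e₁_cross_add_e₂_cross_eq_zero_iff, cross_eq_neg_e₃_iff hα hαβ, eq_vec3_iff]
  rw [vec3_dotProduct] at hα hβ hαβ
  constructor
  · rintro ⟨hα2, hβ2, hβ0⟩
    by_cases hsum : α 0 + β 1 = 0
    · exact .inr <| .inr ⟨hα2, hβ0, eq_neg_of_add_eq_zero_right hsum, hβ2⟩
    have hα1 : α 1 = 0 := by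
      have h : α 1 * (α 0 + β 1) = 0 := by linear_combination hαβ - α 2 * hβ2 - α 0 * hβ0
      exact (mul_eq_zero.mp h).resolve_right hsum
    have hβ1 : β 1 = α 0 := by
      have h : (α 0 - β 1) * (α 0 + β 1) = 0 := by
        linear_combination hα - hβ - α 2 * hα2 + β 2 * hβ2 + (β 0 + α 1) * hβ0
      exact (sub_eq_zero.mp ((mul_eq_zero.mp h).resolve_right hsum)).symm
    rcases mul_self_eq_one_iff.mp (show α 0 * α 0 = 1 by
      linear_combination hα - α 1 * hα1 - α 2 * hα2) with h | h
    · exact .inl ⟨⟨h, hα1, hα2⟩, hβ0.trans hα1, hβ1.trans h, hβ2⟩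
    · exact .inr <| .inl ⟨⟨h, hα1, hα2⟩, hβ0.trans hα1, hβ1.trans h, hβ2⟩
  · rintro (⟨⟨-, hα1, hα2⟩, hβ0, -, hβ2⟩ | ⟨⟨-, hα1, hα2⟩, hβ0, -, hβ2⟩ | ⟨hα2, hβ0, -, hβ2⟩)
    · exact ⟨hα2, hβ2, hβ0.trans hα1.symm⟩
    · exact ⟨hα2, hβ2, hβ0.trans hα1.symm⟩
    · exact ⟨hα2, hβ2, hβ0⟩

end CrossProduct

lemma cross_eq_neg_e₃_iff_exists_angle {α β : Fin 3 → ℝ} (hα : α ⬝ᵥ α = 1) (hαβ : α ⬝ᵥ β = 0) :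
    α ⨯₃ β = ![0, 0, -1] ↔ ∃ θ : ℝ, α = ![cos θ, sin θ, 0] ∧ β = ![sin θ, -cos θ, 0] := by
  rw [cross_eq_neg_e₃_iff hα hαβ]
  constructor
  · rintro ⟨hα2, rfl⟩
    rw [vec3_dotProduct, hα2] at hα
    obtain ⟨θ, hcos, hsin⟩ := exists_cos_sin_eq_of_sq_add_sq_eq_one (x := α 0) (y := α 1)
      (by linear_combination hα)
    exact ⟨θ, eq_vec3_iff.mpr ⟨hcos.symm, hsin.symm, hα2⟩, by rw [hcos, hsin]⟩
  · rintro ⟨θ, rfl, rfl⟩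
    simp

/-- For an orthonormal pair `α, β ∈ ℝ³`, the torque `e₁×α + e₂×β`
vanishes iff `(α, β) = (e₁, e₂)`, or `(α, β) = (−e₁, −e₂)`, or `α×β = −e₃`;
moreover the pairs with `α×β = −e₃` form the circle
`α = (cos θ, sin θ, 0)`, `β = (sin θ, −cos θ, 0)`. -/
theorem zero_torque_characterization
    (α β : Fin 3 → ℝ)
    (hα : α ⬝ᵥ α = 1) (hβ : β ⬝ᵥ β = 1) (hαβ : α ⬝ᵥ β = 0) :
    ((![1, 0, 0] : Fin 3 → ℝ) ⨯₃ α + (![0, 1, 0] : Fin 3 → ℝ) ⨯₃ β = 0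
      ↔ (α = ![1, 0, 0] ∧ β = ![0, 1, 0])
        ∨ (α = ![-1, 0, 0] ∧ β = ![0, -1, 0])
        ∨ α ⨯₃ β = ![0, 0, -1])
    ∧ (α ⨯₃ β = ![0, 0, -1]
      ↔ ∃ θ : ℝ, α = ![cos θ, sin θ, 0] ∧ β = ![sin θ, -cos θ, 0]) :=
  ⟨e₁_cross_add_e₂_cross_eq_zero_iff_of_orthonormal hα hβ hαβ,
    cross_eq_neg_e₃_iff_exists_angle hα hαβ⟩
end

section
/- Let n > 0 and let ψ : ℝ → ℝ be twice differentiable with ψ'' = −2 sin ψ (the pendulum equation). Then the curve α(t) = (cos ψ(t), −sin ψ(t), 0), β(t) = (sin ψ(t), cos ψ(t), 0), M(t) = (0, 0, ψ'(t)) is a solution of the system dM/dt = M×ω + e₁×α + e₂×β, dα/dt = α×ω, dβ/dt = β×ω with ω = M I⁻¹, I = diag(n,n,1). Along this solution L = n(ω₁γ₁ + ω₂γ₂) + ω₃(γ₃ − 1) ≡ 0 (γ = α×β) and H = (1/2)(n(ω₁² + ω₂²) + ω₃²) − α₁ − β₂ = (1/2)ψ'(t)² − 2 cos ψ(t), which is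 constant and ≥ −2. -/
open Matrix Real

/-! The solution is a uniform-axis rotation: `α` and `β` turn about `e₃` with angular velocity
`ω = ψ' e₃`, so `α' = α × ω` and `β' = β × ω` are the chain rule for `cos ψ`, `sin ψ`, and the
gravity torques `e₁ × α + e₂ × β = -2 sin ψ e₃` turn the `M`-equation into the pendulum
equation. `L` and `H` are then direct computations with `sin² + cos² = 1`, and `H` is the
pendulum energy, conserved because its derivative `ψ' (ψ'' + 2 sin ψ)` vanishes. -/

theorem Matrix.inv_diagonal_of_ne_zero {ι K : Type*} [Fintype ι] [DecidableEq ι] [Field K]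
    {d : ι → K} (hd : ∀ i, d i ≠ 0) : (diagonal d)⁻¹ = diagonal d⁻¹ := by
  refine inv_eq_right_inv ?_
  rw [diagonal_mul_diagonal, ← diagonal_one]
  exact congrArg diagonal (funext fun i => mul_inv_cancel₀ (hd i))

theorem hasDerivAt_vec3 {𝕜 E : Type*} [NontriviallyNormedField 𝕜] [NormedAddCommGroup E]
    [NormedSpace 𝕜 E] {f g h : 𝕜 → E} {f' g' h' : E} {t : 𝕜}
    (hf : HasDerivAt f f' t) (hg : HasDerivAt g g' t) (hh : HasDerivAt h h' t) :
    HasDerivAt (fun s => ![f s, g s, h s]) ![f', g', h'] t := by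
  rw [hasDerivAt_pi]
  intro i
  fin_cases i
  exacts [hf, hg, hh]

theorem hasDerivAt_rotation_e₃ {ψ : ℝ → ℝ} {ψ' t : ℝ} (hψ : HasDerivAt ψ ψ' t) (a b : ℝ) :
    HasDerivAt (fun s => ![a * cos (ψ s) + b * sin (ψ s), b * cos (ψ s) - a * sin (ψ s), 0])
      (![a * cos (ψ t) + b * sin (ψ t), b * cos (ψ t) - a * sin (ψ t), 0] ⨯₃ ![0, 0, ψ']) t := by
  have h₁ : HasDerivAt (fun s => a * cos (ψ s) + b * sin (ψ s))
      (a * (-sin (ψ t) * ψ') + b * (cos (ψ t) * ψ')) t :=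
    (hψ.cos.const_mul a).add (hψ.sin.const_mul b)
  have h₂ : HasDerivAt (fun s => b * cos (ψ s) - a * sin (ψ s))
      (b * (-sin (ψ t) * ψ') - a * (cos (ψ t) * ψ')) t :=
    (hψ.cos.const_mul b).sub (hψ.sin.const_mul a)
  convert hasDerivAt_vec3 h₁ h₂ (hasDerivAt_const t (0 : ℝ)) using 1
  rw [cross_apply]
  refine vec3_eq ?_ ?_ ?_ <;>
    simp only [cons_val_zero, cons_val_one, cons_val, mul_zero, sub_zero, zero_sub, sub_self,
      neg_mul, mul_neg] <;> ring

theorem pendulum_energy_hasDerivAt_zero {c : ℝ} {ψ ψ' : ℝ → ℝ}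
    (hψ : ∀ t, HasDerivAt ψ (ψ' t) t) (hψ' : ∀ t, HasDerivAt ψ' (-c * sin (ψ t)) t) (t : ℝ) :
    HasDerivAt (fun s => (1 / 2) * ψ' s ^ 2 - c * cos (ψ s)) 0 t := by
  refine ((((hψ' t).fun_pow 2).const_mul (1 / 2)).sub ((hψ t).cos.const_mul c)).congr_deriv ?_
  ring

theorem pendulum_energy_eq {c : ℝ} {ψ ψ' : ℝ → ℝ}
    (hψ : ∀ t, HasDerivAt ψ (ψ' t) t) (hψ' : ∀ t, HasDerivAt ψ' (-c * sin (ψ t)) t)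
    (t₁ t₂ : ℝ) :
    (1 / 2) * ψ' t₁ ^ 2 - c * cos (ψ t₁) = (1 / 2) * ψ' t₂ ^ 2 - c * cos (ψ t₂) :=
  have hE := pendulum_energy_hasDerivAt_zero hψ hψ'
  is_const_of_deriv_eq_zero (fun t => (hE t).differentiableAt) (fun t => (hE t).deriv) t₁ t₂

/-- For any solution `ψ` of the pendulum equation `ψ'' = −2 sin ψ`,
the curve `α = (cos ψ, −sin ψ, 0)`, `β = (sin ψ, cos ψ, 0)`, `M = (0, 0, ψ')`
solves the equations of motion; along it `L ≡ 0` and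
`H = (1/2)ψ'² − 2 cos ψ`, which is constant and `≥ −2`. -/
theorem pendulum_motions
    (n : ℝ) (hn : 0 < n)
    (ψ ψ' : ℝ → ℝ)
    (hψ : ∀ t, HasDerivAt ψ (ψ' t) t)
    (hψ' : ∀ t, HasDerivAt ψ' (-2 * sin (ψ t)) t)
    (α β M ω γ : ℝ → Fin 3 → ℝ)
    (hA : ∀ t, α t = ![cos (ψ t), -sin (ψ t), 0])
    (hB : ∀ t, β t = ![sin (ψ t), cos (ψ t), 0])
    (hM : ∀ t, M t = ![0, 0, ψ' t])
    (hω : ∀ t, ω t = M t ᵥ* (Matrix.diagonal ![n, n, 1])⁻¹)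
    (hγ : ∀ t, γ t = α t ⨯₃ β t) :
    (∀ t, HasDerivAt M
        (M t ⨯₃ ω t + (![1, 0, 0] : Fin 3 → ℝ) ⨯₃ α t
          + (![0, 1, 0] : Fin 3 → ℝ) ⨯₃ β t) t
      ∧ HasDerivAt α (α t ⨯₃ ω t) t
      ∧ HasDerivAt β (β t ⨯₃ ω t) t)
    ∧ (∀ t, n * (ω t 0 * γ t 0 + ω t 1 * γ t 1) + ω t 2 * (γ t 2 - 1) = 0)
    ∧ (∀ t, (1 / 2) * (n * (ω t 0 ^ 2 + ω t 1 ^ 2) + ω t 2 ^ 2) - α t 0 - β t 1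
              = (1 / 2) * ψ' t ^ 2 - 2 * cos (ψ t))
    ∧ (∀ t₁ t₂ : ℝ, (1 / 2) * ψ' t₁ ^ 2 - 2 * cos (ψ t₁)
                      = (1 / 2) * ψ' t₂ ^ 2 - 2 * cos (ψ t₂))
    ∧ (∀ t, -2 ≤ (1 / 2) * ψ' t ^ 2 - 2 * cos (ψ t)) := by
  have hI : ∀ i, ![n, n, 1] i ≠ 0 := by
    intro i; fin_cases i <;> simp [hn.ne']
  obtain rfl : ω = fun t => ![0, 0, ψ' t] := funext fun t => by
    rw [hω, hM, inv_diagonal_of_ne_zero hI]; ext i; fin_cases i <;> simp [vecMul_diagonal]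
  obtain rfl : γ = fun t => α t ⨯₃ β t := funext hγ
  obtain rfl : α = fun t => ![cos (ψ t), -sin (ψ t), 0] := funext hA
  obtain rfl : β = fun t => ![sin (ψ t), cos (ψ t), 0] := funext hB
  obtain rfl : M = fun t => ![0, 0, ψ' t] := funext hM
  refine ⟨fun t => ⟨?_, ?_, ?_⟩, fun t => ?_, fun t => ?_, pendulum_energy_eq hψ hψ', fun t => ?_⟩
  · convert hasDerivAt_vec3 (hasDerivAt_const t 0) (hasDerivAt_const t 0) (hψ' t) using 1
    simp [cross_apply, two_mul]
  · simpa using hasDerivAt_rotation_e₃ (hψ t) 1 0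
  · simpa using hasDerivAt_rotation_e₃ (hψ t) 0 1
  · simp [cross_apply, ← sq]
  · simp [two_mul, sub_sub]
  · linarith [cos_le_one (ψ t), sq_nonneg (ψ' t)]
end

section
/- Let P(x) = (n−1)² x³ − 2(n−1)(n+5) x² + 4(5n−2) x − 8n. For every real n > 3, the polynomial P has exactly one real root, and this root is greater than 1; in particular P has no root in [0, 1). -/
/-- Key positivity: `F(m,s) = s³+(30-6m)s²-132ms+216m+264m²+32m³ > 0`
for `m > 0`, `s ≥ -20`. -/
lemma aux_key_pos (m s : ℝ) (hm : 0 < m) (hs : -20 ≤ s) :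
    0 < s ^ 3 + (30 - 6 * m) * s ^ 2 - 132 * m * s + 216 * m + 264 * m ^ 2 + 32 * m ^ 3 := by
  rcases le_or_gt s 0 with h | h
  · -- F = s²(s+30) + 6m(-s)(s+22) + 216m + 264m² + 32m³
    nlinarith [mul_nonneg (sq_nonneg s) (by linarith : (0:ℝ) ≤ s + 30),
      mul_nonneg (mul_nonneg hm.le (by linarith : (0:ℝ) ≤ -s))
        (by linarith : (0:ℝ) ≤ s + 22),
      mul_pos hm hm, mul_pos (mul_pos hm hm) hm]
  · -- 4(30+2m)F = 4(30+2m)s(s-4m)² + (2(30+2m)s-132m-16m²)² + m(25920+15984m+1728m²)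
    nlinarith [mul_nonneg (mul_nonneg h.le (by linarith : (0:ℝ) ≤ 30 + 2 * m))
        (sq_nonneg (s - 4 * m)),
      sq_nonneg (2 * (30 + 2 * m) * s - 132 * m - 16 * m ^ 2),
      mul_pos hm hm, mul_pos (mul_pos hm hm) hm,
      (by linarith : (0:ℝ) ≤ 30 + 2 * m)]

/-- Below the threshold `c = (4n+14)/(3(n-1))` the cubic is negative. -/
lemma aux_neg_below (n x : ℝ) (hn : 3 < n) (hx : 3 * (n - 1) * x ≤ 4 * n + 14) :
    (n - 1) ^ 2 * x ^ 3 - 2 * (n - 1) * (n + 5) * x ^ 2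
      + 4 * (5 * n - 2) * x - 8 * n < 0 := by
  have hm : (0:ℝ) < n - 3 := by linarith
  have hs : (-20:ℝ) ≤ 4 * n - 6 - 3 * (n - 1) * x := by linarith
  have hF := aux_key_pos (n - 3) (4 * n - 6 - 3 * (n - 1) * x) hm hs
  have hn1 : (0:ℝ) < n - 1 := by linarith
  nlinarith [hF, hn1, mul_pos hn1 hF]

/-- Positivity of the divided difference above the threshold. -/
lemma aux_Q_pos (n x y : ℝ) (hn : 3 < n) (hx : 4 * n + 14 ≤ 3 * (n - 1) * x)
    (hy : 4 * n + 14 ≤ 3 * (n - 1) * y) :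
    0 < (n - 1) ^ 2 * (x ^ 2 + x * y + y ^ 2)
        - 2 * (n - 1) * (n + 5) * (x + y) + 4 * (5 * n - 2) := by
  have hs : 0 ≤ 3 * (n - 1) * x - (4 * n + 14) := by linarith
  have ht : 0 ≤ 3 * (n - 1) * y - (4 * n + 14) := by linarith
  nlinarith [mul_nonneg hs ht, sq_nonneg (3 * (n - 1) * x - (4 * n + 14)),
    sq_nonneg (3 * (n - 1) * y - (4 * n + 14)),
    mul_pos (by linarith : (0:ℝ) < n - 3) (by linarith : (0:ℝ) < n - 1),
    sq_nonneg (x - y)]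

/-- For every `n > 3`, the cubic
`P(x) = (n−1)² x³ − 2(n−1)(n+5) x² + 4(5n−2) x − 8n` has exactly one real root,
this root is greater than `1`, and in particular `P` has no root in `[0, 1)`. -/
theorem cubic_unique_root_above_one
    (P : ℝ → ℝ → ℝ)
    (hP : ∀ n x : ℝ, P n x = (n - 1) ^ 2 * x ^ 3 - 2 * (n - 1) * (n + 5) * x ^ 2
                              + 4 * (5 * n - 2) * x - 8 * n) :
    ∀ n : ℝ, 3 < n →
      (∃! x : ℝ, P n x = 0)
      ∧ (∀ x : ℝ, P n x = 0 → 1 < x)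
      ∧ (∀ x ∈ Set.Ico (0 : ℝ) 1, P n x ≠ 0) := by
  intro n hn
  have hn1 : (0:ℝ) < n - 1 := by linarith
  -- any root lies above the threshold
  have hroot_thresh : ∀ x : ℝ, P n x = 0 → 4 * n + 14 < 3 * (n - 1) * x := by
    intro x hx
    by_contra h
    push_neg at h
    have := aux_neg_below n x hn h
    rw [hP] at hx
    linarith
  have hroot_gt1 : ∀ x : ℝ, P n x = 0 → 1 < x := by
    intro x hx
    have h := hroot_thresh x hx
    nlinarith
  -- uniqueness
  have huniq : ∀ x y : ℝ, P n x = 0 → P n y = 0 → x = y := by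
    intro x y hx hy
    have hxt := hroot_thresh x hx
    have hyt := hroot_thresh y hy
    have hQ := aux_Q_pos n x y hn (le_of_lt hxt) (le_of_lt hyt)
    have hdiff : (x - y) * ((n - 1) ^ 2 * (x ^ 2 + x * y + y ^ 2)
        - 2 * (n - 1) * (n + 5) * (x + y) + 4 * (5 * n - 2)) = 0 := by
      rw [hP] at hx hy
      nlinarith [hx, hy]
    rcases mul_eq_zero.1 hdiff with h | h
    · linarith
    · linarith
  -- existence via IVT on [c, 10n]
  set c : ℝ := (4 * n + 14) / (3 * (n - 1)) with hc
  have h3n1 : (0:ℝ) < 3 * (n - 1) := by linarith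
  have hPc : P n c < 0 := by
    rw [hP]
    apply aux_neg_below n c hn
    rw [hc, mul_div_cancel₀ _ (ne_of_gt h3n1)]
  have hP10n : 0 < P n (10 * n) := by
    rw [hP]
    nlinarith [sq_nonneg n, sq_nonneg (n - 1),
      mul_pos (mul_pos hn1 hn1) (by linarith : (0:ℝ) < n)]
  have hcle : c ≤ 10 * n := by
    rw [hc, div_le_iff₀ h3n1]
    nlinarith
  have hcont : ContinuousOn (P n) (Set.Icc c (10 * n)) := by
    have : P n = fun x => (n - 1) ^ 2 * x ^ 3 - 2 * (n - 1) * (n + 5) * x ^ 2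
        + 4 * (5 * n - 2) * x - 8 * n := funext (hP n)
    rw [this]
    fun_prop
  obtain ⟨x, _, hx0⟩ := intermediate_value_Icc hcle hcont ⟨le_of_lt hPc, le_of_lt hP10n⟩
  refine ⟨⟨x, hx0, fun y hy => huniq y x hy hx0⟩, hroot_gt1, ?_⟩
  intro z hz hPz
  exact absurd (hroot_gt1 z hPz) (not_lt.2 (le_of_lt hz.2))
end
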